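/- arXiv:1504.08238 — 4 statements merged into one kernel-verified Lean document; each statement's English description precedes it below -/
import Mathlib

section
/- Let X and Y be Banach spaces over 𝕂 (= ℝ or ℂ), let Γ be an arbitrary nonempty set, let E be an invariant sequence space over X, and for each l ∈ Γ let E_l be a strongly invariant sequence space over Y. If f : X → Y is compatible with E_l for every l ∈ Γ, then the set G(E, f, (E_l)_{l∈Γ}) = { (x_j)_{j=1}^∞ ∈ E : (f(x_j))_{j=1}^∞ ∉ ⋃_{l∈Γ} E_l } is either empty or spaceable in E. -/
open scoped Classical

/-- The zero-deleted sequence `x⁰`: if `x` has infinitely many nonzero coordinates, the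
sequence of its nonzero coordinates in order; otherwise `0`. -/
noncomputable def zeroFree {X : Type*} [Zero X] (x : ℕ → X) : ℕ → X :=
  if {j | x j ≠ 0}.Infinite then fun k => x (Nat.nth (fun j => x j ≠ 0) k) else 0

/-- An invariant sequence space over a Banach space `X` (Definition 1.1 of the paper):
an infinite-dimensional Banach space of `X`-valued sequences such that
(b1) for `x` with `x⁰ ≠ 0`, `x ∈ E ↔ x⁰ ∈ E` and `‖x‖ ≤ K‖x⁰‖`, and
(b2) `‖x j‖ ≤ ‖x‖` for every `x ∈ E` and every `j`.  Completeness and closedness are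
expressed via the metric induced by the norm function. -/
structure InvariantSeqSpace (𝕂 : Type*) (X : Type*) [RCLike 𝕂]
    [NormedAddCommGroup X] [NormedSpace 𝕂 X] where
  carrier : Submodule 𝕂 (ℕ → X)
  norm : (ℕ → X) → ℝ
  norm_nonneg : ∀ x ∈ carrier, 0 ≤ norm x
  norm_eq_zero_iff : ∀ x ∈ carrier, (norm x = 0 ↔ x = 0)
  norm_smul : ∀ (a : 𝕂), ∀ x ∈ carrier, norm (a • x) = ‖a‖ * norm x
  norm_add_le : ∀ x ∈ carrier, ∀ y ∈ carrier, norm (x + y) ≤ norm x + norm y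
  complete : ∀ u : ℕ → ℕ → X, (∀ n, u n ∈ carrier) →
    (∀ ε : ℝ, 0 < ε → ∃ N, ∀ m ≥ N, ∀ n ≥ N, norm (u m - u n) < ε) →
    ∃ x ∈ carrier, ∀ ε : ℝ, 0 < ε → ∃ N, ∀ n ≥ N, norm (u n - x) < ε
  infiniteDimensional : ¬ Module.Finite 𝕂 carrier
  K : ℝ
  K_pos : 0 < K
  mem_iff_zeroFree_mem : ∀ x : ℕ → X, zeroFree x ≠ 0 → (x ∈ carrier ↔ zeroFree x ∈ carrier)
  norm_le_K_mul : ∀ x : ℕ → X, zeroFree x ≠ 0 → x ∈ carrier → norm x ≤ K * norm (zeroFree x)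
  coord_norm_le : ∀ x ∈ carrier, ∀ j : ℕ, ‖x j‖ ≤ norm x

/-- A strongly invariant sequence space: an invariant sequence space containing `c₀₀(X)`
and such that a sequence belongs to the space iff all of its subsequences do. -/
structure StronglyInvariantSeqSpace (𝕂 : Type*) (X : Type*) [RCLike 𝕂]
    [NormedAddCommGroup X] [NormedSpace 𝕂 X] extends InvariantSeqSpace 𝕂 X where
  c00_subset : ∀ x : ℕ → X, {j | x j ≠ 0}.Finite → x ∈ carrier
  mem_iff_subseq : ∀ x : ℕ → X,
    x ∈ carrier ↔ ∀ n : ℕ → ℕ, StrictMono n → (fun k => x (n k)) ∈ carrier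

/-- A subset `A` of an invariant sequence space `E` is spaceable if `A ∪ {0}` contains a
closed (w.r.t. the norm of `E`) infinite-dimensional linear subspace of `E`. -/
def Spaceable {𝕂 X : Type*} [RCLike 𝕂] [NormedAddCommGroup X] [NormedSpace 𝕂 X]
    (E : InvariantSeqSpace 𝕂 X) (A : Set (ℕ → X)) : Prop :=
  ∃ V : Submodule 𝕂 (ℕ → X), V ≤ E.carrier ∧ ¬ Module.Finite 𝕂 V ∧
    (V : Set (ℕ → X)) ⊆ A ∪ {0} ∧
    ∀ u : ℕ → ℕ → X, (∀ n, u n ∈ V) → ∀ z ∈ E.carrier,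
      (∀ ε : ℝ, 0 < ε → ∃ N, ∀ n ≥ N, E.norm (u n - z) < ε) → z ∈ V

/-- `f : X → Y` with `f 0 = 0` is compatible with an invariant sequence space `F` over `Y`:
`(f(x_j))_j ∉ F` implies `(f(a x_j))_j ∉ F` for every scalar `a ≠ 0`. -/
def Compatible {𝕂 X Y : Type*} [RCLike 𝕂] [NormedAddCommGroup X] [NormedSpace 𝕂 X]
    [NormedAddCommGroup Y] [NormedSpace 𝕂 Y]
    (f : X → Y) (F : InvariantSeqSpace 𝕂 Y) : Prop :=
  f 0 = 0 ∧ ∀ (x : ℕ → X) (a : 𝕂), a ≠ 0 →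
    (fun j => f (x j)) ∉ F.carrier → (fun j => f (a • x j)) ∉ F.carrier

/-!
Take `x ∈ G`. As `f 0 = 0` and `c₀₀(Y) ⊆ E_l`, the sequence `x` has infinitely many nonzero
coordinates. Split `ℕ` into the infinitely many infinite rows `{Nat.pair i k | k}` and, for
`a : ℕ → 𝕂`, put `a i • x` on row `i`. A single row copy of `x` has the zero-deleted
sequence `x⁰`, so it lies in `E` by (b1), and these copies are linearly independent. The
sequences of this form lying in `E` make a closed subspace: by (b2) convergence in `E` is
coordinatewise, and each coefficient `a i` is read off from one nonzero coordinate of `x`.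
If `a i ≠ 0`, row `i` of such a sequence is `a i • x`; compatibility gives
`(f (a i • x j))_j ∉ E_l`, and since `E_l` is closed under subsequences the whole image
sequence is not in `E_l` either.
-/

open Filter Topology

section ZeroFree

variable {X : Type*} [Zero X] {x y : ℕ → X}

lemma zeroFree_ne_zero (hx : {j | x j ≠ 0}.Infinite) : zeroFree x ≠ 0 := by
  intro h
  have := congrFun h 0
  simp only [zeroFree, if_pos hx, Pi.zero_apply] at this
  exact Nat.nth_mem_of_infinite hx 0 this

lemma zeroFree_eq_of_strictMono {φ : ℕ → ℕ} (hφ : StrictMono φ) (hyx : ∀ k, y (φ k) = x k)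
    (hy : ∀ j ∉ Set.range φ, y j = 0) : zeroFree y = zeroFree x := by
  have hsupp : {j | y j ≠ 0} = φ '' {k | x k ≠ 0} := by
    ext j
    by_cases hj : j ∈ Set.range φ
    · obtain ⟨k, rfl⟩ := hj
      simp [hyx, hφ.injective.eq_iff]
    · simp only [Set.mem_ofPred_eq, hy j hj, ne_eq, not_true_eq_false, false_iff]
      rintro ⟨k, -, rfl⟩
      exact hj ⟨k, rfl⟩
  have hinf : {j | y j ≠ 0}.Infinite ↔ {k | x k ≠ 0}.Infinite := by
    rw [hsupp, Set.infinite_image_iff hφ.injective.injOn]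
  by_cases hx : {k | x k ≠ 0}.Infinite
  · simp only [zeroFree, if_pos hx, if_pos (hinf.2 hx)]
    funext t
    have hnth := Nat.nth_comp_of_strictMono (p := fun j => y j ≠ 0) (n := t) hφ
      (fun j hj => by_contra fun hj' => hj (hy j hj'))
      (fun hfin => absurd hfin (hinf.2 hx))
    simp only [hyx] at hnth
    rw [← hnth, hyx]
  · simp only [zeroFree, if_neg hx, if_neg (mt hinf.1 hx)]

end ZeroFree

section SeqSpaces

variable {𝕂 X : Type*} [RCLike 𝕂] [NormedAddCommGroup X] [NormedSpace 𝕂 X]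

lemma InvariantSeqSpace.mem_iff_of_zeroFree_eq (E : InvariantSeqSpace 𝕂 X) {x y : ℕ → X}
    (hyx : zeroFree y = zeroFree x) (hx : {j | x j ≠ 0}.Infinite) :
    y ∈ E.carrier ↔ x ∈ E.carrier := by
  have hx0 := zeroFree_ne_zero hx
  rw [E.mem_iff_zeroFree_mem y (hyx ▸ hx0), hyx, ← E.mem_iff_zeroFree_mem x hx0]

lemma InvariantSeqSpace.tendsto_pi_of_norm_sub (E : InvariantSeqSpace 𝕂 X) {u : ℕ → ℕ → X}
    {z : ℕ → X} (hu : ∀ n, u n ∈ E.carrier) (hz : z ∈ E.carrier)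
    (h : ∀ ε : ℝ, 0 < ε → ∃ N, ∀ n ≥ N, E.norm (u n - z) < ε) :
    Tendsto u atTop (𝓝 z) := by
  refine tendsto_pi_nhds.2 fun j => Metric.tendsto_atTop.2 fun ε hε => ?_
  obtain ⟨N, hN⟩ := h ε hε
  refine ⟨N, fun n hn => ?_⟩
  rw [dist_eq_norm]
  exact (E.coord_norm_le _ (sub_mem (hu n) hz) j).trans_lt (hN n hn)

lemma StronglyInvariantSeqSpace.comp_mem (F : StronglyInvariantSeqSpace 𝕂 X) {y : ℕ → X}
    (hy : y ∈ F.carrier) {φ : ℕ → ℕ} (hφ : StrictMono φ) : y ∘ φ ∈ F.carrier :=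
  (F.mem_iff_subseq y).1 hy φ hφ

lemma StronglyInvariantSeqSpace.infinite_support_of_comp_not_mem
    (F : StronglyInvariantSeqSpace 𝕂 X) {W : Type*} [Zero W] {f : W → X} (hf : f 0 = 0)
    {x : ℕ → W} (hx : (fun j => f (x j)) ∉ F.carrier) : {j | x j ≠ 0}.Infinite := by
  refine fun hfin => hx (F.c00_subset _ (hfin.subset fun j hj hxj => hj ?_))
  simp [hxj, hf]

end SeqSpaces

section Spread

/-- `spreadMap x a` carries `a i • x` on the `i`-th row `{Nat.pair i k | k : ℕ}` of `ℕ`. -/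
def spreadMap {R M : Type*} [Semiring R] [AddCommMonoid M] [Module R M] (x : ℕ → M) :
    (ℕ → R) →ₗ[R] (ℕ → M) where
  toFun a j := a (Nat.unpair j).1 • x (Nat.unpair j).2
  map_add' a b := by funext j; simp [add_smul]
  map_smul' c a := by funext j; simp [mul_smul]

variable {R M : Type*} [Semiring R] [AddCommMonoid M] [Module R M] {x : ℕ → M}

lemma spreadMap_apply (a : ℕ → R) (j : ℕ) :
    spreadMap x a j = a (Nat.unpair j).1 • x (Nat.unpair j).2 := rfl

@[simp]
lemma spreadMap_apply_pair (a : ℕ → R) (i k : ℕ) : spreadMap x a (Nat.pair i k) = a i • x k := by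
  simp [spreadMap_apply]

lemma Nat.strictMono_pair (i : ℕ) : StrictMono (Nat.pair i) := fun _ _ => Nat.pair_lt_pair_right i

lemma zeroFree_spreadMap_single (i : ℕ) :
    zeroFree (spreadMap x (Pi.single i (1 : R))) = zeroFree x := by
  refine zeroFree_eq_of_strictMono (Nat.strictMono_pair i) (by simp) fun j hj => ?_
  have hi : (Nat.unpair j).1 ≠ i := fun h => hj ⟨(Nat.unpair j).2, by rw [← h, Nat.pair_unpair]⟩
  simp [spreadMap_apply, hi]

lemma spreadMap_injective {R M : Type*} [Ring R] [IsDomain R] [AddCommGroup M] [Module R M]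
    [Module.IsTorsionFree R M] {x : ℕ → M} (hx : x ≠ 0) :
    Function.Injective (spreadMap (R := R) x) := by
  obtain ⟨k, hk⟩ : ∃ k, x k ≠ 0 := Function.ne_iff.1 hx
  intro a b hab
  funext i
  apply smul_left_injective R hk
  simpa using congrFun hab (Nat.pair i k)

lemma mem_range_spreadMap_of_tendsto {𝕜 M ι : Type*} [NontriviallyNormedField 𝕜]
    [CompleteSpace 𝕜] [NormedAddCommGroup M] [NormedSpace 𝕜 M] {x : ℕ → M} (hx : x ≠ 0)
    {l : Filter ι} [l.NeBot] {a : ι → ℕ → 𝕜} {z : ℕ → M}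
    (h : Tendsto (fun n => spreadMap x (a n)) l (𝓝 z)) :
    z ∈ LinearMap.range (spreadMap (R := 𝕜) x) := by
  obtain ⟨k, hk⟩ : ∃ k, x k ≠ 0 := Function.ne_iff.1 hx
  have hemb := isClosedEmbedding_smul_left (𝕜 := 𝕜) hk
  have hcoord : ∀ j, Tendsto (fun n => spreadMap x (a n) j) l (𝓝 (z j)) := tendsto_pi_nhds.1 h
  have hrow (i : ℕ) : ∃ b, Tendsto (fun n => a n i) l (𝓝 b) := by
    have hi : Tendsto (fun n => a n i • x k) l (𝓝 (z (Nat.pair i k))) := by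
      simpa using hcoord (Nat.pair i k)
    obtain ⟨b, hb : b • x k = _⟩ :=
      hemb.isClosed_range.mem_of_tendsto hi (.of_forall fun n => ⟨_, rfl⟩)
    exact ⟨b, hemb.isInducing.tendsto_nhds_iff.2 (by rw [hb]; exact hi)⟩
  choose b hb using hrow
  exact ⟨b, funext fun j => tendsto_nhds_unique ((hb _).smul_const _) (hcoord j)⟩

end Spread

section Spaceability

variable {𝕂 X : Type*} [RCLike 𝕂] [NormedAddCommGroup X] [NormedSpace 𝕂 X]

namespace InvariantSeqSpace

variable (E : InvariantSeqSpace 𝕂 X) {x : ℕ → X}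

lemma spreadMap_single_mem (hx : x ∈ E.carrier) (hsupp : {j | x j ≠ 0}.Infinite) (i : ℕ) :
    spreadMap x (Pi.single i (1 : 𝕂)) ∈ E.carrier :=
  (E.mem_iff_of_zeroFree_eq (zeroFree_spreadMap_single i) hsupp).2 hx

lemma not_finite_inf_range_spreadMap (hx : x ∈ E.carrier) (hsupp : {j | x j ≠ 0}.Infinite) :
    ¬ Module.Finite 𝕂 ↥(E.carrier ⊓ LinearMap.range (spreadMap x)) := by
  have hx0 : x ≠ 0 := fun h => hsupp (by simp [h])
  let V := E.carrier ⊓ LinearMap.range (spreadMap (R := 𝕂) x)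
  let v (i : ℕ) : V := ⟨_, E.spreadMap_single_mem hx hsupp i, _, rfl⟩
  have hv : LinearIndependent 𝕂 v := by
    have hsingle := (Pi.linearIndependent_single_one ℕ 𝕂).map' (spreadMap x)
      (LinearMap.ker_eq_bot.2 (spreadMap_injective hx0))
    exact .of_comp V.subtype hsingle
  exact fun _ => Module.Finite.not_linearIndependent_of_infinite _ hv

lemma seqClosed_inf_range_spreadMap (hx : x ≠ 0) (u : ℕ → ℕ → X)
    (hu : ∀ n, u n ∈ E.carrier ⊓ LinearMap.range (spreadMap x)) (z : ℕ → X)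
    (hz : z ∈ E.carrier) (h : ∀ ε : ℝ, 0 < ε → ∃ N, ∀ n ≥ N, E.norm (u n - z) < ε) :
    z ∈ E.carrier ⊓ LinearMap.range (spreadMap x) := by
  choose a ha using fun n => (hu n).2
  refine ⟨hz, mem_range_spreadMap_of_tendsto hx (l := atTop) (a := a) ?_⟩
  simpa only [ha] using E.tendsto_pi_of_norm_sub (fun n => (hu n).1) hz h

end InvariantSeqSpace

lemma StronglyInvariantSeqSpace.comp_spreadMap_not_mem {Y : Type*} [NormedAddCommGroup Y]
    [NormedSpace 𝕂 Y] (F : StronglyInvariantSeqSpace 𝕂 Y) {f : X → Y}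
    (hf : Compatible f F.toInvariantSeqSpace) {x : ℕ → X} (hx : (fun j => f (x j)) ∉ F.carrier)
    {a : ℕ → 𝕂} (ha : a ≠ 0) : (fun j => f (spreadMap x a j)) ∉ F.carrier := by
  obtain ⟨i, hi⟩ : ∃ i, a i ≠ 0 := Function.ne_iff.1 ha
  intro hmem
  refine hf.2 x (a i) hi hx ?_
  simpa [Function.comp_def] using F.comp_mem hmem (Nat.strictMono_pair i)

end Spaceability

theorem spaceability_of_G_general {𝕂 X Y : Type*} [RCLike 𝕂]
    [NormedAddCommGroup X] [NormedSpace 𝕂 X]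
    [NormedAddCommGroup Y] [NormedSpace 𝕂 Y]
    {Γ : Type*} [Nonempty Γ]
    (E : InvariantSeqSpace 𝕂 X) (El : Γ → StronglyInvariantSeqSpace 𝕂 Y)
    (f : X → Y) (hf : ∀ l : Γ, Compatible f (El l).toInvariantSeqSpace) :
    {x : ℕ → X | x ∈ E.carrier ∧ ∀ l : Γ, (fun j => f (x j)) ∉ (El l).carrier} = ∅ ∨
      Spaceable E
        {x : ℕ → X | x ∈ E.carrier ∧ ∀ l : Γ, (fun j => f (x j)) ∉ (El l).carrier} := by
  refine or_iff_not_imp_left.2 fun hG => ?_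
  obtain ⟨x, hxE, hxf⟩ := Set.nonempty_iff_ne_empty.2 hG
  obtain ⟨l₀⟩ := ‹Nonempty Γ›
  have hsupp := (El l₀).infinite_support_of_comp_not_mem (hf l₀).1 (hxf l₀)
  have hx0 : x ≠ 0 := fun h => hsupp (by simp [h])
  refine ⟨E.carrier ⊓ LinearMap.range (spreadMap x), inf_le_left,
    E.not_finite_inf_range_spreadMap hxE hsupp, ?_, E.seqClosed_inf_range_spreadMap hx0⟩
  rintro _ ⟨hzE, a, rfl⟩
  by_cases ha : a = 0
  · simp [ha]
  exact Or.inl ⟨hzE, fun l => (El l).comp_spreadMap_not_mem (hf l) (hxf l) ha⟩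

/-- **Theorem 2.7 (main theorem).**  If `E` is an invariant sequence space over `X`,
`(E_l)_{l ∈ Γ}` are strongly invariant sequence spaces over `Y` and `f : X → Y` is
compatible with every `E_l`, then
`G(E, f, (E_l)) = {(x_j) ∈ E : (f(x_j)) ∉ ⋃_l E_l}` is either empty or spaceable in `E`. -/
theorem spaceability_of_G {𝕂 X Y : Type*} [RCLike 𝕂]
    [NormedAddCommGroup X] [NormedSpace 𝕂 X] [CompleteSpace X]
    [NormedAddCommGroup Y] [NormedSpace 𝕂 Y] [CompleteSpace Y]
    {Γ : Type*} [Nonempty Γ]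
    (E : InvariantSeqSpace 𝕂 X) (El : Γ → StronglyInvariantSeqSpace 𝕂 Y)
    (f : X → Y) (hf : ∀ l : Γ, Compatible f (El l).toInvariantSeqSpace) :
    {x : ℕ → X | x ∈ E.carrier ∧ ∀ l : Γ, (fun j => f (x j)) ∉ (El l).carrier} = ∅ ∨
      Spaceable E
        {x : ℕ → X | x ∈ E.carrier ∧ ∀ l : Γ, (fun j => f (x j)) ∉ (El l).carrier} :=
  spaceability_of_G_general E El f hf
end

section
/- Let X and Y be Banach spaces over 𝕂 (= ℝ or ℂ), let Γ be a nonempty set, let E be an invariant sequence space over X, for each l ∈ Γ let E_l be a strongly invariant sequence space over Y, and let f : X → Y satisfy f(0) = 0. If x = (x_j)_{j=1}^∞ ∈ E satisfies (f(x_j))_{j=1}^∞ ∉ ⋃_{l∈Γ} E_l, then x has infinitely many nonzero coordinates (so x⁰ ≠ 0), x⁰ ∈ E, and writing x⁰ = (x_{j_k})_{k=1}^∞ one has (f(x_{j_k}))_{k=1}^∞ ∉ ⋃_{l∈Γ} E_l; that is, x⁰ ∈ G(E, f, (E_l)_{l∈Γ}). -/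
open scoped Classical

/-! Since `f 0 = 0`, the sequence `f ∘ x` vanishes wherever `x` does. If `x` had only finitely
many nonzero coordinates, `f ∘ x` would lie in `c₀₀(Y) ⊆ E_l`. Otherwise `f ∘ x⁰` is a
subsequence of `f ∘ x` that keeps all of its nonzero terms, so the two have the same
zero-deleted sequence, and (b1) carries membership in `E_l` from `f ∘ x⁰` back to `f ∘ x`. -/

section ZeroFree

variable {X : Type*} [Zero X]

theorem zeroFree_of_infinite {x : ℕ → X} (hx : {j | x j ≠ 0}.Infinite) :
    zeroFree x = fun k => x (Nat.nth (fun j => x j ≠ 0) k) :=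
  if_pos hx

theorem zeroFree_of_finite {x : ℕ → X} (hx : {j | x j ≠ 0}.Finite) : zeroFree x = 0 :=
  if_neg hx.not_infinite

theorem zeroFree_ne_zero_iff {x : ℕ → X} : zeroFree x ≠ 0 ↔ {j | x j ≠ 0}.Infinite := by
  refine ⟨fun h hfin => h (zeroFree_of_finite hfin), fun hx h => ?_⟩
  have h0 := congrFun h 0
  rw [zeroFree_of_infinite hx] at h0
  exact Nat.nth_mem_of_infinite hx 0 h0

theorem zeroFree_comp_of_support_subset_range {x : ℕ → X} {n : ℕ → ℕ} (hn : StrictMono n)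
    (hsupp : {j | x j ≠ 0} ⊆ Set.range n) : zeroFree (x ∘ n) = zeroFree x := by
  have himage : n '' {k | (x ∘ n) k ≠ 0} = {j | x j ≠ 0} :=
    Set.image_preimage_eq_of_subset hsupp
  by_cases hfin : {j | x j ≠ 0}.Finite
  · rw [zeroFree_of_finite hfin,
      zeroFree_of_finite (x := x ∘ n) (hfin.preimage hn.injective.injOn)]
  · have hinf : {k | (x ∘ n) k ≠ 0}.Infinite :=
      Set.Infinite.of_image n (himage ▸ hfin)
    rw [zeroFree_of_infinite hinf, zeroFree_of_infinite hfin]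
    funext k
    exact congrArg x (Nat.nth_comp_of_strictMono hn hsupp
      fun hfi => absurd hfi hfin)

end ZeroFree

theorem StronglyInvariantSeqSpace.mem_of_comp_mem {𝕂 Y : Type*} [RCLike 𝕂]
    [NormedAddCommGroup Y] [NormedSpace 𝕂 Y] (F : StronglyInvariantSeqSpace 𝕂 Y)
    {y : ℕ → Y} {n : ℕ → ℕ} (hn : StrictMono n) (hsupp : {j | y j ≠ 0} ⊆ Set.range n)
    (hyn : y ∘ n ∈ F.carrier) : y ∈ F.carrier := by
  by_cases hfin : {j | y j ≠ 0}.Finite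
  · exact F.c00_subset y hfin
  · have hne : zeroFree y ≠ 0 := zeroFree_ne_zero_iff.mpr hfin
    have hsame := zeroFree_comp_of_support_subset_range hn hsupp
    rw [F.mem_iff_zeroFree_mem y hne, ← hsame]
    exact (F.mem_iff_zeroFree_mem _ (hsame ▸ hne)).mp hyn

theorem zeroFree_mem_G_general {𝕂 X Y : Type*} [RCLike 𝕂]
    [NormedAddCommGroup X] [NormedSpace 𝕂 X]
    [NormedAddCommGroup Y] [NormedSpace 𝕂 Y]
    {Γ : Type*} [Nonempty Γ]
    (E : InvariantSeqSpace 𝕂 X) (El : Γ → StronglyInvariantSeqSpace 𝕂 Y)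
    (f : X → Y) (hf0 : f 0 = 0) (x : ℕ → X) (hxE : x ∈ E.carrier)
    (hx : ∀ l : Γ, (fun j => f (x j)) ∉ (El l).carrier) :
    {j | x j ≠ 0}.Infinite ∧ zeroFree x ≠ 0 ∧ zeroFree x ∈ E.carrier ∧
      ∀ l : Γ, (fun k => f (zeroFree x k)) ∉ (El l).carrier := by
  have hinf : {j | x j ≠ 0}.Infinite := fun hfin => hx (Classical.arbitrary Γ)
    ((El _).c00_subset _ (hfin.subset (Function.support_comp_subset hf0 x)))
  have hne : zeroFree x ≠ 0 := zeroFree_ne_zero_iff.mpr hinf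
  refine ⟨hinf, hne, (E.mem_iff_zeroFree_mem x hne).mp hxE, fun l hl => hx l ?_⟩
  rw [zeroFree_of_infinite hinf] at hl
  refine (El l).mem_of_comp_mem (Nat.nth_strictMono hinf) ?_ hl
  rw [Nat.range_nth_of_infinite hinf]
  exact Function.support_comp_subset hf0 x

/-- **Step 1 of the proof of Theorem 2.7.**  If `f 0 = 0` and
`x ∈ G(E, f, (E_l)_{l ∈ Γ})`, then `x` has infinitely many nonzero coordinates (so
`x⁰ ≠ 0`), `x⁰ ∈ E`, and `(f(x⁰_k))_k ∉ ⋃_l E_l`; that is, `x⁰ ∈ G(E, f, (E_l))`. -/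
theorem zeroFree_mem_G {𝕂 X Y : Type*} [RCLike 𝕂]
    [NormedAddCommGroup X] [NormedSpace 𝕂 X] [CompleteSpace X]
    [NormedAddCommGroup Y] [NormedSpace 𝕂 Y] [CompleteSpace Y]
    {Γ : Type*} [Nonempty Γ]
    (E : InvariantSeqSpace 𝕂 X) (El : Γ → StronglyInvariantSeqSpace 𝕂 Y)
    (f : X → Y) (hf0 : f 0 = 0) (x : ℕ → X) (hxE : x ∈ E.carrier)
    (hx : ∀ l : Γ, (fun j => f (x j)) ∉ (El l).carrier) :
    {j | x j ≠ 0}.Infinite ∧ zeroFree x ≠ 0 ∧ zeroFree x ∈ E.carrier ∧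
      ∀ l : Γ, (fun k => f (zeroFree x k)) ∉ (El l).carrier :=
  zeroFree_mem_G_general E El f hf0 x hxE hx
end

section
/- Let X be a Banach space over 𝕂 (= ℝ or ℂ), let E be an invariant sequence space over X with constant K (from condition (b1)), and let x = (x_j)_{j=1}^∞ ∈ E have infinitely many nonzero coordinates, with x⁰ = (x_{j_k})_{k=1}^∞ ≠ 0. Let (ℕ_i)_{i=1}^∞ be a partition of ℕ into pairwise disjoint infinite sets, write ℕ_i = { i_1 < i_2 < ⋯ }, and for each i ∈ ℕ define y_i ∈ X^ℕ to be the sequence whose i_k-th coordinate equals x_{j_k} for every k ∈ ℕ and whose other coordinates are 0. Then: (i) y_i ∈ E for every i, with y_i⁰ = x⁰ and ‖y_i‖_E ≤ K‖x⁰‖_E; (ii) the set {y_1, y_2, …} is linearly independent; (iii) for every (a_i)_{i=1}^∞ ∈ ℓ_1 the series Σ_{i=1}^∞ a_i y_i converges in E; and (iv) the map T : ℓ_1 → E, T((a_i)_{i=1}^∞) = Σ_{i=1}^∞ a_i y_i, is a well-defined injective continuous linear operator. -/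
open scoped Classical

/-!
Each `y i` is `x⁰` spread along `N i`, so `(y i)⁰ = x⁰` and (b1) puts `y i` in `E` with
`‖y i‖ ≤ K ‖x⁰‖`. Since `(E, E.norm)` is a Banach space, the bounded sequence `(y i)` yields a
bounded operator `ℓ¹ → E`, `a ↦ ∑ aᵢ yᵢ`. By (b2) coordinate evaluations on `E` are continuous,
and at the first point of `N i` the vector `y i` is nonzero while every other `y j` vanishes;
evaluating there recovers `aᵢ`, which gives injectivity and linear independence.
-/
open Filter Topology

section ZeroFree

variable {X : Type*} [Zero X]

theorem infinite_support_of_zeroFree_ne_zero {x : ℕ → X} (hx : zeroFree x ≠ 0) :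
    {j | x j ≠ 0}.Infinite := by
  by_contra h
  exact hx (if_neg h)

theorem zeroFree_apply_ne_zero {x : ℕ → X} (hx : zeroFree x ≠ 0) (k : ℕ) :
    zeroFree x k ≠ 0 := by
  have hinf := infinite_support_of_zeroFree_ne_zero hx
  rw [zeroFree, if_pos hinf]
  exact Nat.nth_mem_of_infinite hinf k

theorem zeroFree_eq_of_apply_nth {S : Set ℕ} (hS : S.Infinite) {z w : ℕ → X}
    (hz : ∀ k, z k ≠ 0) (hw_nth : ∀ k, w (Nat.nth (· ∈ S) k) = z k) (hw : ∀ m ∉ S, w m = 0) :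
    zeroFree w = z := by
  have hsupp : (fun m => w m ≠ 0) = (· ∈ S) := by
    funext m
    refine propext ⟨fun h => by_contra fun hm => h (hw m hm), fun hm => ?_⟩
    rw [← Nat.nth_count hm, hw_nth]
    exact hz _
  funext k
  rw [zeroFree, if_pos (by simpa only [Set.ofPred_mem_eq, hsupp] using hS), hsupp]
  exact hw_nth k

end ZeroFree

theorem linearIndependent_of_apply_eq_zero {ι α R M : Type*} [Ring R] [IsDomain R]
    [AddCommGroup M] [Module R M] [Module.IsTorsionFree R M] {v : ι → α → M} (p : ι → α)
    (hself : ∀ i, v i (p i) ≠ 0) (hother : ∀ i j, j ≠ i → v j (p i) = 0) :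
    LinearIndependent R v := by
  refine LinearIndependent.of_comp (LinearMap.funLeft R M p) ?_
  have hrestrict : LinearMap.funLeft R M p ∘ v = fun i => Pi.single i (v i (p i)) := by
    funext i i'
    by_cases h : i' = i
    · subst h; simp [LinearMap.funLeft]
    · simp [LinearMap.funLeft, hother i' i (Ne.symm h), h]
  rw [hrestrict]
  exact Pi.linearIndependent_single_of_ne_zero hself

section LpOneSeries

variable {𝕂 F : Type*} [NormedField 𝕂] [NormedAddCommGroup F] [NormedSpace 𝕂 F]
  {v : ℕ → F} {C : ℝ}

theorem lp.hasSum_norm_one (a : lp (fun _ : ℕ => 𝕂) 1) : HasSum (fun i => ‖a i‖) ‖a‖ := by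
  simpa using lp.hasSum_norm (p := 1) (by norm_num) a

theorem norm_smul_le_of_norm_le {w : F} (hw : ‖w‖ ≤ C) (c : 𝕂) : ‖c • w‖ ≤ C * ‖c‖ := by
  rw [norm_smul, mul_comm]
  gcongr

variable [CompleteSpace F]

theorem summable_smul_of_norm_le (hv : ∀ i, ‖v i‖ ≤ C) (a : lp (fun _ : ℕ => 𝕂) 1) :
    Summable fun i => a i • v i :=
  .of_norm_bounded ((lp.hasSum_norm_one a).mul_left C).summable fun i =>
    norm_smul_le_of_norm_le (hv i) (a i)

variable (𝕂 v C) in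
noncomputable def lpOneSeries (hv : ∀ i, ‖v i‖ ≤ C) : lp (fun _ : ℕ => 𝕂) 1 →L[𝕂] F :=
  LinearMap.mkContinuous
    { toFun := fun a => ∑' i, a i • v i
      map_add' := fun a b => by
        simp only [lp.coeFn_add, Pi.add_apply, add_smul]
        exact (summable_smul_of_norm_le hv a).tsum_add (summable_smul_of_norm_le hv b)
      map_smul' := fun c a => by
        simp only [lp.coeFn_smul, Pi.smul_apply, smul_eq_mul, mul_smul, RingHom.id_apply]
        exact (summable_smul_of_norm_le hv a).tsum_const_smul c }
    C fun a => tsum_of_norm_bounded ((lp.hasSum_norm_one a).mul_left C)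
      fun i => norm_smul_le_of_norm_le (hv i) (a i)

theorem hasSum_lpOneSeries (hv : ∀ i, ‖v i‖ ≤ C) (a : lp (fun _ : ℕ => 𝕂) 1) :
    HasSum (fun i => a i • v i) (lpOneSeries 𝕂 v C hv a) :=
  (summable_smul_of_norm_le hv a).hasSum

theorem norm_lpOneSeries_apply_le (hv : ∀ i, ‖v i‖ ≤ C) (a : lp (fun _ : ℕ => 𝕂) 1) :
    ‖lpOneSeries 𝕂 v C hv a‖ ≤ C * ‖a‖ :=
  tsum_of_norm_bounded ((lp.hasSum_norm_one a).mul_left C) fun i =>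
    norm_smul_le_of_norm_le (hv i) (a i)

theorem lpOneSeries_injective {G : Type*} [NormedAddCommGroup G] [NormedSpace 𝕂 G]
    (hv : ∀ i, ‖v i‖ ≤ C) (φ : ℕ → F →L[𝕂] G) (hself : ∀ i, φ i (v i) ≠ 0)
    (hother : ∀ i j, j ≠ i → φ i (v j) = 0) : Function.Injective (lpOneSeries 𝕂 v C hv) := by
  refine (injective_iff_map_eq_zero _).2 fun a ha => lp.ext (funext fun i => ?_)
  have hφ : HasSum (fun j => a j • φ i (v j)) (a i • φ i (v i)) := by
    convert hasSum_single i fun j hj => ?_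
    rw [hother i j hj, smul_zero]
  have h := ((hasSum_lpOneSeries hv a).mapL (φ i)).unique (by simpa using hφ)
  rw [ha, map_zero, eq_comm, smul_eq_zero] at h
  exact h.resolve_right (hself i)

end LpOneSeries

namespace InvariantSeqSpace

variable {𝕂 X : Type*} [RCLike 𝕂] [NormedAddCommGroup X] [NormedSpace 𝕂 X]
  (E : InvariantSeqSpace 𝕂 X)

/-- The Banach space `(E, E.norm)`. A type synonym is needed because, as a subtype of `ℕ → X`,
`E.carrier` already carries the product topology. -/
def Space : Type _ := E.carrier

instance : AddCommGroup E.Space := inferInstanceAs (AddCommGroup E.carrier)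

instance : Module 𝕂 E.Space := inferInstanceAs (Module 𝕂 E.carrier)

def toSeq : E.Space →ₗ[𝕂] ℕ → X := E.carrier.subtype

def ofSeq (x : ℕ → X) (hx : x ∈ E.carrier) : E.Space := (⟨x, hx⟩ : E.carrier)

variable {E}

theorem toSeq_mem (v : E.Space) : E.toSeq v ∈ E.carrier := (v : E.carrier).2

@[simp]
theorem toSeq_ofSeq (x : ℕ → X) (hx : x ∈ E.carrier) : E.toSeq (E.ofSeq x hx) = x := rfl

theorem toSeq_injective : Function.Injective E.toSeq := Subtype.val_injective

variable (E)

instance : Norm E.Space := ⟨fun v => E.norm (E.toSeq v)⟩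

variable {E}

theorem norm_def (v : E.Space) : ‖v‖ = E.norm (E.toSeq v) := rfl

variable (E)

theorem normedSpaceCore : NormedSpace.Core 𝕂 E.Space where
  norm_nonneg v := E.norm_nonneg _ (toSeq_mem v)
  norm_smul c v := E.norm_smul c _ (toSeq_mem v)
  norm_triangle v w := E.norm_add_le _ (toSeq_mem v) _ (toSeq_mem w)
  norm_eq_zero_iff v := (E.norm_eq_zero_iff _ (toSeq_mem v)).trans
    (toSeq_injective.eq_iff' (map_zero _))

noncomputable instance : NormedAddCommGroup E.Space := .ofCore E.normedSpaceCore

noncomputable instance : NormedSpace 𝕂 E.Space := .ofCore E.normedSpaceCore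

variable {E}

theorem tendsto_iff {u : ℕ → E.Space} {v : E.Space} :
    Tendsto u atTop (𝓝 v) ↔
      ∀ ε : ℝ, 0 < ε → ∃ M, ∀ m ≥ M, E.norm (E.toSeq (u m) - E.toSeq v) < ε := by
  simp only [Metric.tendsto_atTop, dist_eq_norm, norm_def, map_sub]

instance : CompleteSpace E.Space := by
  refine Metric.complete_of_cauchySeq_tendsto fun u hu => ?_
  have hcauchy : ∀ ε : ℝ, 0 < ε → ∃ M, ∀ m ≥ M, ∀ n ≥ M,
      E.norm (E.toSeq (u m) - E.toSeq (u n)) < ε := by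
    simpa only [dist_eq_norm, norm_def, map_sub] using Metric.cauchySeq_iff.1 hu
  obtain ⟨x, hx, hlim⟩ := E.complete _ (fun n => toSeq_mem (u n)) hcauchy
  exact ⟨E.ofSeq x hx, tendsto_iff.2 hlim⟩

variable (E)

noncomputable def coordCLM (j : ℕ) : E.Space →L[𝕂] X :=
  (LinearMap.proj j ∘ₗ E.toSeq).mkContinuous 1 fun v => by
    simpa [norm_def] using E.coord_norm_le _ (toSeq_mem v) j

variable {E}

theorem mem_of_zeroFree_eq {w x : ℕ → X} (hwx : zeroFree w = zeroFree x) (hx0 : zeroFree x ≠ 0)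
    (hx : x ∈ E.carrier) : w ∈ E.carrier :=
  (E.mem_iff_zeroFree_mem w (hwx ▸ hx0)).2 (hwx ▸ (E.mem_iff_zeroFree_mem x hx0).1 hx)

theorem norm_le_of_zeroFree_eq {w x : ℕ → X} (hwx : zeroFree w = zeroFree x)
    (hx0 : zeroFree x ≠ 0) (hw : w ∈ E.carrier) : E.norm w ≤ E.K * E.norm (zeroFree x) :=
  hwx ▸ E.norm_le_K_mul w (hwx ▸ hx0) hw

end InvariantSeqSpace

open Finset in
theorem basic_sequences_and_operator_general {𝕂 X : Type*} [RCLike 𝕂]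
    [NormedAddCommGroup X] [NormedSpace 𝕂 X]
    (E : InvariantSeqSpace 𝕂 X) (x : ℕ → X) (hxE : x ∈ E.carrier)
    (hx0 : zeroFree x ≠ 0)
    (N : ℕ → Set ℕ) (hNdisj : ∀ i i', i ≠ i' → Disjoint (N i) (N i'))
    (hNinf : ∀ i, (N i).Infinite)
    (y : ℕ → ℕ → X)
    (hy₁ : ∀ i k : ℕ, y i (Nat.nth (· ∈ N i) k) = zeroFree x k)
    (hy₂ : ∀ i m : ℕ, m ∉ N i → y i m = 0) :
    (∀ i : ℕ, y i ∈ E.carrier ∧ zeroFree (y i) = zeroFree x ∧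
        E.norm (y i) ≤ E.K * E.norm (zeroFree x)) ∧
    LinearIndependent 𝕂 y ∧
    (∀ a : lp (fun _ : ℕ => 𝕂) 1, ∃ s ∈ E.carrier, ∀ ε : ℝ, 0 < ε →
        ∃ M : ℕ, ∀ m ≥ M, E.norm ((∑ i ∈ range m, a i • y i) - s) < ε) ∧
    ∃ T : lp (fun _ : ℕ => 𝕂) 1 → ℕ → X,
      (∀ a, T a ∈ E.carrier) ∧
      (∀ a, ∀ ε : ℝ, 0 < ε →
        ∃ M : ℕ, ∀ m ≥ M, E.norm ((∑ i ∈ range m, a i • y i) - T a) < ε) ∧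
      (∀ a b, T (a + b) = T a + T b) ∧
      (∀ (c : 𝕂) (a), T (c • a) = c • T a) ∧
      Function.Injective T ∧
      ∃ C : ℝ, ∀ a, E.norm (T a) ≤ C * ‖a‖ := by
  have hzy (i : ℕ) : zeroFree (y i) = zeroFree x :=
    zeroFree_eq_of_apply_nth (hNinf i) (zeroFree_apply_ne_zero hx0) (hy₁ i) (hy₂ i)
  have hyE (i : ℕ) : y i ∈ E.carrier := E.mem_of_zeroFree_eq (hzy i) hx0 hxE
  have hy_norm (i : ℕ) : E.norm (y i) ≤ E.K * E.norm (zeroFree x) :=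
    E.norm_le_of_zeroFree_eq (hzy i) hx0 (hyE i)
  let p (i : ℕ) : ℕ := Nat.nth (· ∈ N i) 0
  have hself (i : ℕ) : y i (p i) ≠ 0 := (hy₁ i 0).symm ▸ zeroFree_apply_ne_zero hx0 0
  have hother (i j : ℕ) (hji : j ≠ i) : y j (p i) = 0 :=
    hy₂ j _ fun hj => (hNdisj j i hji).ne_of_mem hj (Nat.nth_mem_of_infinite (hNinf i) 0) rfl
  let v (i : ℕ) : E.Space := E.ofSeq (y i) (hyE i)
  have hv (i : ℕ) : ‖v i‖ ≤ E.K * E.norm (zeroFree x) := hy_norm i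
  let T := lpOneSeries 𝕂 v _ hv
  have hT (a : lp (fun _ : ℕ => 𝕂) 1) (ε : ℝ) (hε : 0 < ε) :
      ∃ M : ℕ, ∀ m ≥ M, E.norm ((∑ i ∈ range m, a i • y i) - E.toSeq (T a)) < ε := by
    simpa [v] using
      InvariantSeqSpace.tendsto_iff.1 (hasSum_lpOneSeries hv a).tendsto_sum_nat ε hε
  refine ⟨fun i => ⟨hyE i, hzy i, hy_norm i⟩, linearIndependent_of_apply_eq_zero p hself hother,
    fun a => ⟨_, InvariantSeqSpace.toSeq_mem (T a), hT a⟩, fun a => E.toSeq (T a),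
    fun a => InvariantSeqSpace.toSeq_mem (T a), hT, fun a b => by simp, fun c a => by simp,
    InvariantSeqSpace.toSeq_injective.comp
      (lpOneSeries_injective hv (fun i => E.coordCLM (p i)) hself hother),
    _, fun a => norm_lpOneSeries_apply_le hv a⟩

open Finset in
/-- **Step 2 of the proof of Theorem 2.7.**  Given `x ∈ E` with infinitely many nonzero
coordinates and a partition `(ℕ_i)` of `ℕ` into pairwise disjoint infinite sets
`ℕ_i = {i_1 < i_2 < ⋯}`, define `y_i` as the sequence whose `i_k`-th coordinate is
`x⁰_k` and whose other coordinates vanish.  Then (i) each `y_i ∈ E`, `y_i⁰ = x⁰` and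
`‖y_i‖ ≤ K‖x⁰‖`; (ii) `{y_1, y_2, …}` is linearly independent; (iii) for every
`(a_i) ∈ ℓ_1` the series `Σ_i a_i y_i` converges in `E`; and (iv) the map
`T : ℓ_1 → E`, `T((a_i)) = Σ_i a_i y_i`, is a well-defined injective continuous linear
operator. -/
theorem basic_sequences_and_operator {𝕂 X : Type*} [RCLike 𝕂]
    [NormedAddCommGroup X] [NormedSpace 𝕂 X] [CompleteSpace X]
    (E : InvariantSeqSpace 𝕂 X) (x : ℕ → X) (hxE : x ∈ E.carrier)
    (hxinf : {j | x j ≠ 0}.Infinite) (hx0 : zeroFree x ≠ 0)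
    (N : ℕ → Set ℕ) (hNdisj : ∀ i i', i ≠ i' → Disjoint (N i) (N i'))
    (hNinf : ∀ i, (N i).Infinite) (hNcover : ⋃ i, N i = Set.univ)
    (y : ℕ → ℕ → X)
    (hy₁ : ∀ i k : ℕ, y i (Nat.nth (· ∈ N i) k) = zeroFree x k)
    (hy₂ : ∀ i m : ℕ, m ∉ N i → y i m = 0) :
    (∀ i : ℕ, y i ∈ E.carrier ∧ zeroFree (y i) = zeroFree x ∧
        E.norm (y i) ≤ E.K * E.norm (zeroFree x)) ∧
    LinearIndependent 𝕂 y ∧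
    (∀ a : lp (fun _ : ℕ => 𝕂) 1, ∃ s ∈ E.carrier, ∀ ε : ℝ, 0 < ε →
        ∃ M : ℕ, ∀ m ≥ M, E.norm ((∑ i ∈ range m, a i • y i) - s) < ε) ∧
    ∃ T : lp (fun _ : ℕ => 𝕂) 1 → ℕ → X,
      (∀ a, T a ∈ E.carrier) ∧
      (∀ a, ∀ ε : ℝ, 0 < ε →
        ∃ M : ℕ, ∀ m ≥ M, E.norm ((∑ i ∈ range m, a i • y i) - T a) < ε) ∧
      (∀ a b, T (a + b) = T a + T b) ∧
      (∀ (c : 𝕂) (a), T (c • a) = c • T a) ∧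
      Function.Injective T ∧
      ∃ C : ℝ, ∀ a, E.norm (T a) ≤ C * ‖a‖ :=
  basic_sequences_and_operator_general E x hxE hx0 N hNdisj hNinf y hy₁ hy₂
end

section
/- In ℓ_2, let (e_j)_{j=1}^∞ denote the canonical unit vector basis and let A = span{e_1} ∪ span{e_2, e_3} ∪ span{e_4, e_5, e_6} ∪ ⋯, i.e., A = ⋃_{n=1}^∞ span{ e_j : T_{n-1} < j ≤ T_n } where T_0 = 0 and T_n = 1 + 2 + ⋯ + n. Then A is not pointwise 2-lineable: e_1 ∈ A, but there is no 2-dimensional linear subspace V of ℓ_2 with e_1 ∈ V and V ⊆ A ∪ {0}. -/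
/-! A vector of `A` whose first coordinate is nonzero lies in the first block, so it is a
multiple of `e_1`. If `V ∋ e_1` sits inside `A ∪ {0}`, then for every `v ∈ V` the vector
`e_1 + v - v_1 e_1 ∈ V` has first coordinate `1`, hence vanishes off the first coordinate,
and so does `v`. Thus `V ⊆ span{e_1}`, which is one-dimensional. -/

/-- The canonical unit vectors `e_j` of `ℓ_2 = lp (fun _ : ℕ => 𝕂) 2`. -/
noncomputable def unitVec (𝕂 : Type*) [RCLike 𝕂] (j : ℕ) : lp (fun _ : ℕ => 𝕂) 2 :=
  lp.single 2 j 1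

/-- `T n = 1 + 2 + ⋯ + n`. -/
def triangular (n : ℕ) : ℕ := n * (n + 1) / 2

/-- The set `A = span{e_1} ∪ span{e_2, e_3} ∪ span{e_4, e_5, e_6} ∪ ⋯` in `ℓ_2`. -/
noncomputable def blockUnion (𝕂 : Type*) [RCLike 𝕂] : Set (lp (fun _ : ℕ => 𝕂) 2) :=
  ⋃ n ∈ {n : ℕ | 1 ≤ n},
    (Submodule.span 𝕂
      {v | ∃ j : ℕ, triangular (n - 1) < j ∧ j ≤ triangular n ∧ v = unitVec 𝕂 j} :
        Set (lp (fun _ : ℕ => 𝕂) 2))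

lemma triangular_zero : triangular 0 = 0 := rfl

lemma triangular_one : triangular 1 = 1 := rfl

lemma one_le_triangular {m : ℕ} (hm : 1 ≤ m) : 1 ≤ triangular m := by
  unfold triangular
  rw [Nat.le_div_iff_mul_le two_pos]
  nlinarith

section Coordinates

variable {𝕂 : Type*} [RCLike 𝕂]

lemma unitVec_apply_self (j : ℕ) : unitVec 𝕂 j j = 1 :=
  lp.single_apply_self 2 j 1

lemma unitVec_apply_of_ne {j k : ℕ} (h : k ≠ j) : unitVec 𝕂 j k = 0 :=
  lp.single_apply_ne 2 j 1 h

lemma apply_eq_zero_of_mem_span {S : Set (lp (fun _ : ℕ => 𝕂) 2)} {k : ℕ}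
    (hS : ∀ u ∈ S, u k = 0) {x : lp (fun _ : ℕ => 𝕂) 2} (hx : x ∈ Submodule.span 𝕂 S) :
    x k = 0 := by
  induction hx using Submodule.span_induction with
  | mem u hu => exact hS u hu
  | zero => rfl
  | add u w _ _ hu hw => simp [hu, hw]
  | smul c u _ hu => simp [hu]

lemma le_span_unitVec_of_forall_apply_eq_zero {V : Submodule 𝕂 (lp (fun _ : ℕ => 𝕂) 2)}
    {j : ℕ} (hj : unitVec 𝕂 j ∈ V) (hV : ∀ w ∈ V, w j ≠ 0 → ∀ k ≠ j, w k = 0) :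
    V ≤ Submodule.span 𝕂 {unitVec 𝕂 j} := by
  intro v hv
  refine Submodule.mem_span_singleton.2 ⟨v j, lp.ext (funext fun k => ?_)⟩
  by_cases hkj : k = j
  · subst hkj
    simp [unitVec_apply_self]
  · set w := unitVec 𝕂 j + (v - v j • unitVec 𝕂 j)
    have hw : w ∈ V := V.add_mem hj (V.sub_mem hv (V.smul_mem _ hj))
    have hw_apply (i : ℕ) : w i = unitVec 𝕂 j i + (v i - v j • unitVec 𝕂 j i) := rfl
    have hwj : w j = 1 := by simp [hw_apply, unitVec_apply_self]
    have hwk : w k = v k := by simp [hw_apply, unitVec_apply_of_ne hkj]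
    have hvk : v k = 0 := hwk ▸ hV w hw (by simp [hwj]) k hkj
    simp [hvk, unitVec_apply_of_ne hkj]

lemma unitVec_one_mem_blockUnion : unitVec 𝕂 1 ∈ blockUnion 𝕂 :=
  Set.mem_biUnion (le_refl 1)
    (Submodule.subset_span ⟨1, by simp [triangular_zero, triangular_one]⟩)

lemma apply_eq_zero_of_mem_blockUnion_of_apply_one_ne_zero {x : lp (fun _ : ℕ => 𝕂) 2}
    (hx : x ∈ blockUnion 𝕂) (hx1 : x 1 ≠ 0) {k : ℕ} (hk : k ≠ 1) : x k = 0 := by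
  simp only [blockUnion, Set.mem_iUnion, Set.mem_ofPred_eq, SetLike.mem_coe] at hx
  obtain ⟨n, hn, hxn⟩ := hx
  obtain rfl : n = 1 := by
    by_contra hn1
    have hT : 1 ≤ triangular (n - 1) := one_le_triangular (by omega)
    refine hx1 (apply_eq_zero_of_mem_span ?_ hxn)
    rintro _ ⟨j, hj, -, rfl⟩
    exact unitVec_apply_of_ne (by omega)
  refine apply_eq_zero_of_mem_span ?_ hxn
  rintro _ ⟨j, hj0, hj1, rfl⟩
  rw [triangular_zero] at hj0
  rw [triangular_one] at hj1
  exact unitVec_apply_of_ne (by omega)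

end Coordinates

/-- **Remark 3.9, second part.**  The set
`A = span{e_1} ∪ span{e_2, e_3} ∪ span{e_4, e_5, e_6} ∪ ⋯` is not pointwise
`2`-lineable: `e_1 ∈ A`, but no `2`-dimensional subspace `V` of `ℓ_2` satisfies
`e_1 ∈ V ⊆ A ∪ {0}`. -/
theorem blockUnion_not_pointwise_two_lineable (𝕂 : Type*) [RCLike 𝕂] :
    unitVec 𝕂 1 ∈ blockUnion 𝕂 ∧
      ¬ ∃ V : Submodule 𝕂 (lp (fun _ : ℕ => 𝕂) 2),
        Module.finrank 𝕂 V = 2 ∧ unitVec 𝕂 1 ∈ V ∧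
          (V : Set (lp (fun _ : ℕ => 𝕂) 2)) ⊆ blockUnion 𝕂 ∪ {0} := by
  refine ⟨unitVec_one_mem_blockUnion, fun ⟨V, hdim, he, hsub⟩ => ?_⟩
  have hle : V ≤ Submodule.span 𝕂 {unitVec 𝕂 1} := by
    refine le_span_unitVec_of_forall_apply_eq_zero he fun w hw hw1 k hk => ?_
    have hw0 : w ≠ 0 := by rintro rfl; exact hw1 rfl
    exact apply_eq_zero_of_mem_blockUnion_of_apply_one_ne_zero
      ((hsub hw).resolve_right hw0) hw1 hk
  have hrank := (Submodule.finrank_mono hle).trans (finrank_span_le_card {unitVec 𝕂 1})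
  simp only [Set.toFinset_singleton, Finset.card_singleton] at hrank
  omega
end
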